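/- The double-extension disambiguation works: if m is a positive integer with binary representation of length d, then the integer m' whose binary representation is the concatenation of m's bits with themselves equals m·2^d + m, and its binary representation has even length 2d with equal left and right halves. -/

import Mathlib

private lemma aux_bits : ∀ m : ℕ, 0 < m → ∀ a : ℕ,
    Nat.bits (m + a * 2 ^ (Nat.bits m).length) = Nat.bits m ++ Nat.bits a := by
  intro m
  induction m using Nat.strong_induction_on with
  | _ m ih =>
    intro hm a
    obtain ⟨b, n, rfl⟩ : ∃ b n, Nat.bit b n = m := ⟨m.bodd, m.div2, Nat.bit_bodd_div2 m⟩
    have hbits : Nat.bits (Nat.bit b n) = b :: Nat.bits n := by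
      apply Nat.bits_append_bit
      intro h0
      subst h0
      cases b with
      | true => rfl
      | false => simp [Nat.bit] at hm
    rcases Nat.eq_zero_or_pos n with h0 | hpos
    · subst h0
      have hbt : b = true := by
        cases b with
        | true => rfl
        | false => simp [Nat.bit] at hm
      subst hbt
      rw [hbits]
      have h1 : Nat.bit true 0 = 1 := rfl
      have hlen : (Nat.bits 0).length = 0 := by simp [Nat.bits]
      rw [h1, hlen] at *
      have h2 : 1 + a * 2 ^ (true :: Nat.bits 0).length = Nat.bit true a := by
        simp [Nat.bit, Nat.bits]; ring
      rw [h2, Nat.bits_append_bit _ _ (fun _ => rfl)]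
      simp [Nat.bits]
    · rw [hbits]
      have hlt : n < Nat.bit b n := by
        cases b <;> simp [Nat.bit] <;> omega
      have key : Nat.bit b n + a * 2 ^ (b :: Nat.bits n).length
          = Nat.bit b (n + a * 2 ^ (Nat.bits n).length) := by
        cases b <;> simp [Nat.bit, List.length_cons, pow_succ] <;> ring
      rw [key, Nat.bits_append_bit _ _ (by intro h; omega), ih n hlt hpos a]
      simp

theorem double_extend (m : ℕ) (hm : 0 < m) (d : ℕ) (hd : d = (Nat.bits m).length)
    (m' : ℕ) (hm' : m' = m * 2 ^ d + m) :
    (Nat.bits m').length = 2 * d ∧ Nat.bits m' = Nat.bits m ++ Nat.bits m := by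
  have h : Nat.bits m' = Nat.bits m ++ Nat.bits m := by
    rw [hm', hd, Nat.add_comm]
    exact aux_bits m hm m
  refine ⟨?_, h⟩
  rw [h, List.length_append, ← hd]; ring
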